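/- arXiv:2601.20001 — 3 statements merged into one kernel-verified Lean document; each statement's English description precedes it below -/
import Mathlib

section
/- Let (a_n)_{n≥0} be a sequence in a metric space (X, W) and let h > 0, E_0 ≥ 0, and suppose that for every n ≥ 1, (1/(2h)) W(a_n, a_{n-1})^2 + e_n ≤ e_{n-1}, where (e_n)_{n≥0} is a sequence of nonnegative reals with e_0 = E_0. Then for all integers n_1 > n_0 ≥ 0, W(a_{n_0}, a_{n_1}) ≤ √2 · E_0^{1/2} · ((n_1 - n_0) h)^{1/2}. -/
/-!
Each implicit step moves the state by at most `√(2h (e_{k-1} - e_k))`. By the triangle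
inequality and Cauchy–Schwarz, `W(a_{n₀}, a_{n₁})² ≤ (n₁ - n₀) ∑ W(a_k, a_{k+1})²`, and the
energy decrements telescope to at most `E₀`, which gives `W² ≤ 2 E₀ (n₁ - n₀) h`.
-/

open Real Finset

section

variable {X : Type*} [PseudoMetricSpace X]

theorem dist_sq_le_card_mul_sum_dist_sq (f : ℕ → X) {m n : ℕ} (hmn : m ≤ n) :
    dist (f m) (f n) ^ 2 ≤ ((n - m : ℕ) : ℝ) * ∑ i ∈ Ico m n, dist (f i) (f (i + 1)) ^ 2 := by
  calc dist (f m) (f n) ^ 2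
      ≤ (∑ i ∈ Ico m n, dist (f i) (f (i + 1))) ^ 2 :=
        pow_le_pow_left₀ dist_nonneg (dist_le_Ico_sum_dist f hmn) 2
    _ ≤ ((n - m : ℕ) : ℝ) * ∑ i ∈ Ico m n, dist (f i) (f (i + 1)) ^ 2 := by
        simpa only [Nat.card_Ico] using sq_sum_le_card_mul_sum_sq (s := Ico m n)

theorem dist_sq_le_of_dist_sq_succ_le {f : ℕ → X} {e : ℕ → ℝ} {c : ℝ}
    (hstep : ∀ k, dist (f k) (f (k + 1)) ^ 2 ≤ c * (e k - e (k + 1))) {m n : ℕ} (hmn : m ≤ n) :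
    dist (f m) (f n) ^ 2 ≤ ((n - m : ℕ) : ℝ) * (c * (e m - e n)) := by
  have htelescope : ∑ i ∈ Ico m n, c * (e i - e (i + 1)) = c * (e m - e n) := by
    rw [← mul_sum, ← neg_sub (e n), ← sum_Ico_sub e hmn, ← sum_neg_distrib]
    simp only [neg_sub]
  calc dist (f m) (f n) ^ 2
      ≤ ((n - m : ℕ) : ℝ) * ∑ i ∈ Ico m n, dist (f i) (f (i + 1)) ^ 2 :=
        dist_sq_le_card_mul_sum_dist_sq f hmn
    _ ≤ ((n - m : ℕ) : ℝ) * (c * (e m - e n)) := by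
        rw [← htelescope]
        gcongr with i
        exact hstep i

end

theorem minimizing_movements_holder_half_general
    {X : Type*} [PseudoMetricSpace X]
    (a : ℕ → X) (e : ℕ → ℝ) (h E0 : ℝ)
    (hh : 0 < h)
    (he0 : e 0 = E0) (henn : ∀ n, 0 ≤ e n)
    (hdiss : ∀ n : ℕ, 1 ≤ n → (1 / (2 * h)) * dist (a n) (a (n - 1)) ^ 2 + e n ≤ e (n - 1)) :
    ∀ n₀ n₁ : ℕ, n₀ < n₁ →
      dist (a n₀) (a n₁) ≤ Real.sqrt 2 * E0 ^ ((1 : ℝ) / 2) * (((n₁ : ℝ) - n₀) * h) ^ ((1 : ℝ) / 2) := by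
  intro n₀ n₁ hlt
  have hstep (k : ℕ) : dist (a k) (a (k + 1)) ^ 2 ≤ 2 * h * (e k - e (k + 1)) := by
    have hk := hdiss (k + 1) k.succ_pos
    rwa [Nat.add_sub_cancel, dist_comm, div_mul_eq_mul_div, one_mul, ← le_sub_iff_add_le,
      div_le_iff₀' (by positivity)] at hk
  have henergy : Antitone e := antitone_nat_of_succ_le fun k =>
    sub_nonneg.mp <| nonneg_of_mul_nonneg_right ((sq_nonneg _).trans (hstep k)) (by positivity)
  have hsq : dist (a n₀) (a n₁) ^ 2 ≤ 2 * E0 * (((n₁ : ℝ) - n₀) * h) := by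
    have hdecr : e n₀ - e n₁ ≤ E0 := by
      linarith [he0 ▸ henergy (Nat.zero_le n₀), henn n₁]
    calc dist (a n₀) (a n₁) ^ 2 ≤ ((n₁ - n₀ : ℕ) : ℝ) * (2 * h * (e n₀ - e n₁)) :=
          dist_sq_le_of_dist_sq_succ_le hstep hlt.le
      _ ≤ ((n₁ - n₀ : ℕ) : ℝ) * (2 * h * E0) := by gcongr
      _ = 2 * E0 * (((n₁ : ℝ) - n₀) * h) := by push_cast [Nat.cast_sub hlt.le]; ring
  have hE0 : 0 ≤ E0 := he0 ▸ henn 0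
  rw [← sqrt_eq_rpow, ← sqrt_eq_rpow, ← sqrt_mul zero_le_two, ← sqrt_mul (by positivity)]
  exact le_sqrt_of_sq_le hsq

/-- Abstract Hölder-1/2-in-time estimate for minimizing movements: if
`(1/(2h)) W(a_n, a_{n-1})² + e_n ≤ e_{n-1}` with `0 ≤ e_n` and `e_0 = E0`, then
`W(a_{n₀}, a_{n₁}) ≤ √2 · E0^{1/2} · ((n₁ - n₀) h)^{1/2}`. -/
theorem minimizing_movements_holder_half
    {X : Type*} [PseudoMetricSpace X]
    (a : ℕ → X) (e : ℕ → ℝ) (h E0 : ℝ)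
    (hh : 0 < h) (hE0 : 0 ≤ E0)
    (he0 : e 0 = E0) (henn : ∀ n, 0 ≤ e n)
    (hdiss : ∀ n : ℕ, 1 ≤ n → (1 / (2 * h)) * dist (a n) (a (n - 1)) ^ 2 + e n ≤ e (n - 1)) :
    ∀ n₀ n₁ : ℕ, n₀ < n₁ →
      dist (a n₀) (a n₁) ≤ Real.sqrt 2 * E0 ^ ((1 : ℝ) / 2) * (((n₁ : ℝ) - n₀) * h) ^ ((1 : ℝ) / 2) :=
  minimizing_movements_holder_half_general a e h E0 hh he0 henn hdiss
end

section
/- Let 1 ≤ m ≤ 2 and f'(s) = log s + 1 if m = 1, f'(s) = (m/(m-1)) s^{m-1} if 1 < m ≤ 2. Then for all ρ, ρ̃ > 0 and all β ≥ 1, |f'(ρ) - f'(ρ̃)| · (min(ρ, ρ̃, 1))^β ≤ c_m · |ρ - ρ̃|, for some constant c_m depending only on m. -/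
open Real

private lemma fprime_aux (m : ℝ) (hm₁ : 1 ≤ m) (hm₂ : m ≤ 2) {ρ σ : ℝ}
    (hσ : 0 < σ) (hle : σ ≤ ρ) :
    (if m = 1 then Real.log ρ + 1 else (m / (m - 1)) * ρ ^ (m - 1)) -
      (if m = 1 then Real.log σ + 1 else (m / (m - 1)) * σ ^ (m - 1))
      ≤ m * σ ^ (m - 2) * (ρ - σ) := by
  have hρ : 0 < ρ := lt_of_lt_of_le hσ hle
  by_cases hm : m = 1
  · subst hm
    rw [if_pos rfl, if_pos rfl]
    have h1 : Real.log ρ - Real.log σ = Real.log (ρ / σ) := (Real.log_div hρ.ne' hσ.ne').symm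
    have h2 : Real.log (ρ / σ) ≤ ρ / σ - 1 :=
      Real.log_le_sub_one_of_pos (div_pos hρ hσ)
    have h3 : ρ / σ - 1 = σ⁻¹ * (ρ - σ) := by field_simp
    have h4 : σ ^ ((1:ℝ) - 2) = σ⁻¹ := by
      rw [show (1:ℝ) - 2 = -1 by ring, Real.rpow_neg_one]
    calc Real.log ρ + 1 - (Real.log σ + 1) = Real.log (ρ / σ) := by rw [← h1]; ring
      _ ≤ σ⁻¹ * (ρ - σ) := by rw [← h3]; exact h2
      _ = 1 * σ ^ ((1:ℝ) - 2) * (ρ - σ) := by rw [h4]; ring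
  · simp only [hm, if_neg, if_false]
    have hm1 : 1 < m := lt_of_le_of_ne hm₁ (Ne.symm hm)
    have hp0 : 0 ≤ m - 1 := by linarith
    have hp1 : m - 1 ≤ 1 := by linarith
    -- Bernoulli: (1 + s)^(m-1) ≤ 1 + (m-1) s  with s = ρ/σ - 1 ≥ 0
    have hs : (0:ℝ) ≤ ρ / σ - 1 := by
      have : 1 ≤ ρ / σ := (one_le_div hσ).2 hle
      linarith
    have hB := rpow_one_add_le_one_add_mul_self (s := ρ / σ - 1) (by linarith) hp0 hp1
    have hx : (1 + (ρ / σ - 1)) = ρ / σ := by ring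
    rw [hx] at hB
    -- (ρ/σ)^(m-1) ≤ 1 + (m-1)(ρ/σ - 1)
    have hσp : 0 < σ ^ (m - 1) := Real.rpow_pos_of_pos hσ _
    have key : ρ ^ (m - 1) - σ ^ (m - 1) ≤ (m - 1) * σ ^ (m - 2) * (ρ - σ) := by
      have h5 : ρ ^ (m - 1) ≤ (1 + (m - 1) * (ρ / σ - 1)) * σ ^ (m - 1) := by
        have := mul_le_mul_of_nonneg_right hB hσp.le
        rwa [Real.div_rpow hρ.le hσ.le, div_mul_cancel₀ _ hσp.ne'] at this
      have h6 : σ ^ (m - 2) * σ = σ ^ (m - 1) := by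
        rw [← Real.rpow_add_one hσ.ne', show m - 2 + 1 = m - 1 by ring]
      have h7 : (1 + (m - 1) * (ρ / σ - 1)) * σ ^ (m - 1)
          = σ ^ (m - 1) + (m - 1) * σ ^ (m - 2) * (ρ - σ) := by
        have : σ ^ (m - 1) = σ ^ (m - 2) * σ := h6.symm
        rw [this]
        field_simp
      linarith [h5, h7 ▸ h5]
    have hmm : m / (m - 1) * (m - 1) = m :=
      div_mul_cancel₀ m (sub_ne_zero.2 (by linarith))
    calc m / (m - 1) * ρ ^ (m - 1) - m / (m - 1) * σ ^ (m - 1)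
        = m / (m - 1) * (ρ ^ (m - 1) - σ ^ (m - 1)) := by ring
      _ ≤ m / (m - 1) * ((m - 1) * σ ^ (m - 2) * (ρ - σ)) := by
          apply mul_le_mul_of_nonneg_left key
          positivity
      _ = m * σ ^ (m - 2) * (ρ - σ) := by
          rw [← mul_assoc, ← mul_assoc, hmm]

private lemma fprime_mono (m : ℝ) {ρ σ : ℝ} (hσ : 0 < σ) (hρ : 0 < ρ) (hle : σ ≤ ρ)
    (hm₁ : 1 ≤ m) :
    (if m = 1 then Real.log σ + 1 else (m / (m - 1)) * σ ^ (m - 1))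
      ≤ (if m = 1 then Real.log ρ + 1 else (m / (m - 1)) * ρ ^ (m - 1)) := by
  by_cases hm : m = 1
  · subst hm
    rw [if_pos rfl, if_pos rfl]
    have := Real.log_le_log hσ hle
    linarith
  · simp only [hm, if_neg, if_false]
    have hm1 : 1 < m := lt_of_le_of_ne hm₁ (Ne.symm hm)
    apply mul_le_mul_of_nonneg_left _ (div_nonneg (by linarith) (by linarith [lt_of_le_of_ne hm₁ (Ne.symm hm)]))
    exact Real.rpow_le_rpow hσ.le hle (by linarith)

private lemma fprime_one_sided (m : ℝ) (hm₁ : 1 ≤ m) (hm₂ : m ≤ 2) {ρ σ β : ℝ}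
    (hρ : 0 < ρ) (hσ : 0 < σ) (hβ : 1 ≤ β) (hle : σ ≤ ρ) :
    |(if m = 1 then Real.log ρ + 1 else (m / (m - 1)) * ρ ^ (m - 1)) -
        (if m = 1 then Real.log σ + 1 else (m / (m - 1)) * σ ^ (m - 1))| *
      (min (min ρ σ) 1) ^ β ≤ m * |ρ - σ| := by
  have hmin : min ρ σ = σ := min_eq_right hle
  set w : ℝ := min (min ρ σ) 1 with hw
  have hw0 : 0 < w := lt_min (lt_min hρ hσ) one_pos
  have hw1 : w ≤ 1 := min_le_right _ _
  have hwσ : w ≤ σ := le_trans (min_le_left _ _) (by rw [hmin])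
  have habs : |(if m = 1 then Real.log ρ + 1 else (m / (m - 1)) * ρ ^ (m - 1)) -
      (if m = 1 then Real.log σ + 1 else (m / (m - 1)) * σ ^ (m - 1))|
      ≤ m * σ ^ (m - 2) * (ρ - σ) := by
    rw [abs_of_nonneg (by linarith [fprime_mono m hσ hρ hle hm₁])]
    exact fprime_aux m hm₁ hm₂ hσ hle
  have hwβ : w ^ β ≤ w ^ (2 - m) :=
    Real.rpow_le_rpow_of_exponent_ge hw0 hw1 (by linarith)
  have hwσ2 : w ^ (2 - m) ≤ σ ^ (2 - m) :=
    Real.rpow_le_rpow hw0.le hwσ (by linarith)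
  have hcancel : σ ^ (m - 2) * σ ^ (2 - m) = 1 := by
    rw [← Real.rpow_add hσ]; norm_num
  have hσp : 0 < σ ^ (m - 2) := Real.rpow_pos_of_pos hσ _
  have hρσ : 0 ≤ ρ - σ := by linarith
  calc |(if m = 1 then Real.log ρ + 1 else (m / (m - 1)) * ρ ^ (m - 1)) -
          (if m = 1 then Real.log σ + 1 else (m / (m - 1)) * σ ^ (m - 1))| * w ^ β
      ≤ (m * σ ^ (m - 2) * (ρ - σ)) * σ ^ (2 - m) := by
        apply mul_le_mul habs (le_trans hwβ hwσ2) (Real.rpow_nonneg hw0.le _)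
        positivity
    _ = m * (ρ - σ) * (σ ^ (m - 2) * σ ^ (2 - m)) := by ring
    _ = m * (ρ - σ) := by rw [hcancel, mul_one]
    _ ≤ m * |ρ - σ| := by
        apply mul_le_mul_of_nonneg_left (le_abs_self _) (by linarith)

/-- Pointwise weighted estimate for `1 ≤ m ≤ 2`: with `f'(s) = log s + 1` if `m = 1`
and `f'(s) = (m/(m-1)) s^{m-1}` if `1 < m ≤ 2`, one has
`|f'(ρ) - f'(ρ̃)| (ρ ∧ ρ̃ ∧ 1)^β ≤ c_m |ρ - ρ̃|` for all `β ≥ 1`. -/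
theorem fprime_weighted_estimate (m : ℝ) (hm₁ : 1 ≤ m) (hm₂ : m ≤ 2) :
    ∃ c : ℝ, 0 < c ∧ ∀ ρ σ β : ℝ, 0 < ρ → 0 < σ → 1 ≤ β →
      |(if m = 1 then Real.log ρ + 1 else (m / (m - 1)) * ρ ^ (m - 1)) -
          (if m = 1 then Real.log σ + 1 else (m / (m - 1)) * σ ^ (m - 1))| *
        (min (min ρ σ) 1) ^ β ≤ c * |ρ - σ| := by
  refine ⟨m, by linarith, fun ρ σ β hρ hσ hβ => ?_⟩
  rcases le_total σ ρ with hle | hle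
  · exact fprime_one_sided m hm₁ hm₂ hρ hσ hβ hle
  · have := fprime_one_sided m hm₁ hm₂ hσ hρ hβ hle
    rw [abs_sub_comm, min_comm σ ρ, abs_sub_comm σ ρ] at this
    exact this
end

section
/- Let (X, W) be a metric space, h > 0, a_0 ∈ X, and let f(t) := inf over pairs of (1/(2t)) W²(x, a_0) + E(x) be attained for each t ∈ (0,h] by a minimizer x(t), where E : X → [0,∞). Then for 0 < s < t ≤ h, f(t) − f(s) ≤ ((s−t)/(2st)) W²(x(s), a_0); in particular t ↦ f(t) is nonincreasing and locally Lipschitz on (0,h], with d/dt f(t) = −(1/(2t²)) W²(x(t), a_0) at a.e. t. -/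
open Set

/-- De Giorgi variational interpolation estimate: if `x(t)` minimizes
`y ↦ W(y,a₀)²/(2t) + E(y)` for each `t ∈ (0,h]` and
`f(t) = W(x(t),a₀)²/(2t) + E(x(t))`, then for `0 < s < t ≤ h`,
`f(t) − f(s) ≤ ((s−t)/(2st)) W(x(s),a₀)²` and the symmetric reverse inequality holds;
in particular `f` is nonincreasing. -/
theorem deGiorgi_interpolation_difference_bounds
    {X : Type*} [PseudoMetricSpace X]
    (E : X → ℝ) (hE : ∀ y, 0 ≤ E y) (a₀ : X) (h : ℝ) (hh : 0 < h)
    (x : ℝ → X)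
    (hmin : ∀ t ∈ Ioc (0 : ℝ) h, ∀ y : X,
      dist (x t) a₀ ^ 2 / (2 * t) + E (x t) ≤ dist y a₀ ^ 2 / (2 * t) + E y)
    (f : ℝ → ℝ)
    (hf : ∀ t, f t = dist (x t) a₀ ^ 2 / (2 * t) + E (x t)) :
    ∀ s t : ℝ, 0 < s → s < t → t ≤ h →
      (f t - f s ≤ (s - t) / (2 * s * t) * dist (x s) a₀ ^ 2 ∧
        f s - f t ≤ (t - s) / (2 * s * t) * dist (x t) a₀ ^ 2 ∧
        f t ≤ f s) := by
  intro s t hs hst hth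
  have ht : 0 < t := hs.trans hst
  have hsh : s ≤ h := (le_of_lt hst).trans hth
  have h1 : f t ≤ dist (x s) a₀ ^ 2 / (2 * t) + E (x s) := by
    rw [hf t]; exact hmin t ⟨ht, hth⟩ (x s)
  have h2 : f s ≤ dist (x t) a₀ ^ 2 / (2 * s) + E (x t) := by
    rw [hf s]; exact hmin s ⟨hs, hsh⟩ (x t)
  have key1 : f t - f s ≤ (s - t) / (2 * s * t) * dist (x s) a₀ ^ 2 := by
    rw [hf s] at *
    have : f t - (dist (x s) a₀ ^ 2 / (2 * s) + E (x s)) ≤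
        dist (x s) a₀ ^ 2 / (2 * t) - dist (x s) a₀ ^ 2 / (2 * s) := by linarith
    calc f t - (dist (x s) a₀ ^ 2 / (2 * s) + E (x s))
        ≤ dist (x s) a₀ ^ 2 / (2 * t) - dist (x s) a₀ ^ 2 / (2 * s) := this
      _ = (s - t) / (2 * s * t) * dist (x s) a₀ ^ 2 := by field_simp
  have key2 : f s - f t ≤ (t - s) / (2 * s * t) * dist (x t) a₀ ^ 2 := by
    rw [hf t] at *
    have : f s - (dist (x t) a₀ ^ 2 / (2 * t) + E (x t)) ≤
        dist (x t) a₀ ^ 2 / (2 * s) - dist (x t) a₀ ^ 2 / (2 * t) := by linarith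
    calc f s - (dist (x t) a₀ ^ 2 / (2 * t) + E (x t))
        ≤ dist (x t) a₀ ^ 2 / (2 * s) - dist (x t) a₀ ^ 2 / (2 * t) := this
      _ = (t - s) / (2 * s * t) * dist (x t) a₀ ^ 2 := by field_simp
  refine ⟨key1, key2, ?_⟩
  have hd : 0 ≤ dist (x s) a₀ ^ 2 := sq_nonneg _
  have hneg : (s - t) / (2 * s * t) ≤ 0 := by
    apply div_nonpos_of_nonpos_of_nonneg <;> nlinarith
  nlinarith [mul_nonpos_of_nonpos_of_nonneg hneg hd]
end
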